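/- arXiv:2407.00076 — 4 statements merged into one kernel-verified Lean document; each statement's English description precedes it below -/
import Mathlib

section
/- For complex numbers a and b, there exists a monic polynomial Q ∈ ℂ[X] satisfying (X + a)·Q(X) = (X + b)·Q(X + 1) (equality of polynomials) if and only if a − b is a nonnegative integer. -/
/-!
If `a - b = k ∈ ℕ`, then `Q(X) = P_k(X + b)` works, where `P_k = X(X + 1)⋯(X + k - 1)` is the rising
factorial, since `X · P_k(X + 1) = P_{k+1} = P_k · (X + k)`. Conversely, evaluating the equation at
`x = -b` gives a root at `-b` unless `a - b = 0`, and at `x = -b - n - 1` shows that a root at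
`-b - n` forces a root at `-b - n - 1` unless `a - b = n + 1`; so if `a - b ∉ ℕ` the polynomial `Q`
has infinitely many roots and vanishes.
-/

open Polynomial

theorem ascPochhammer_comp_X_add_C_shift {R : Type*} [CommRing R] (b : R) (k : ℕ) :
    (X + C (b + k)) * (ascPochhammer R k).comp (X + C b) =
      (X + C b) * ((ascPochhammer R k).comp (X + C b)).comp (X + 1) := by
  have h := congrArg (·.comp (X + C b))
    ((ascPochhammer_succ_left R k).symm.trans (ascPochhammer_succ_right R k))
  simp only [mul_comp, add_comp, X_comp, natCast_comp, one_comp, comp_assoc] at h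
  rw [comp_assoc, add_comp, X_comp, C_comp, C_add, map_natCast]
  convert h.symm using 1
  · ring
  · congr 2; ring

theorem eval_neg_add_natCast_eq_zero {R : Type*} [CommRing R] [IsDomain R] {a b : R}
    (hab : ∀ k : ℕ, a - b ≠ k) {Q : R[X]} (hQ : (X + C a) * Q = (X + C b) * Q.comp (X + 1))
    (n : ℕ) : Q.eval (-(b + n)) = 0 := by
  have heval (x : R) : (x + a) * Q.eval x = (x + b) * Q.eval (x + 1) := by
    simpa [eval_comp] using congrArg (eval x) hQ
  induction n with
  | zero =>
    have h0 := heval (-b)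
    rw [neg_add_cancel, zero_mul] at h0
    simpa using (mul_eq_zero.mp h0).resolve_left (by simpa [neg_add_eq_sub] using hab 0)
  | succ n ih =>
    have h1 := heval (-(b + (n + 1 : ℕ)))
    rw [show -(b + (n + 1 : ℕ)) + 1 = -(b + n) by push_cast; ring, ih, mul_zero] at h1
    refine (mul_eq_zero.mp h1).resolve_left fun h => hab (n + 1) ?_
    linear_combination h

theorem eq_zero_of_mul_eq_mul_comp_X_add_one {R : Type*} [CommRing R] [IsDomain R] [CharZero R]
    {a b : R} (hab : ∀ k : ℕ, a - b ≠ k) {Q : R[X]}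
    (hQ : (X + C a) * Q = (X + C b) * Q.comp (X + 1)) : Q = 0 :=
  eq_zero_of_infinite_isRoot Q <| Set.infinite_of_injective_forall_mem
    (fun m n h => by simpa using h) (eval_neg_add_natCast_eq_zero hab hQ)

/-- For complex numbers `a` and `b`, there exists a monic polynomial `Q ∈ ℂ[X]` with
`(X + a) · Q(X) = (X + b) · Q(X + 1)` if and only if `a - b` is a nonnegative integer. -/
theorem exists_monic_shift_eq_iff (a b : ℂ) :
    (∃ Q : Polynomial ℂ, Q.Monic ∧ (X + C a) * Q = (X + C b) * (Q.comp (X + 1))) ↔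
      ∃ k : ℕ, a - b = (k : ℂ) := by
  constructor
  · rintro ⟨Q, hQ, hshift⟩
    by_contra! hab
    exact hQ.ne_zero (eq_zero_of_mul_eq_mul_comp_X_add_one hab hshift)
  · rintro ⟨k, hk⟩
    obtain rfl : a = b + k := by linear_combination hk
    exact ⟨_, (monic_ascPochhammer ℂ k).comp_X_add_C b, ascPochhammer_comp_X_add_C_shift b k⟩
end

section
/- Let a, b ∈ ℂ with a − b a nonnegative integer. If there exists a monic polynomial Q ∈ ℂ[X] such that (X + a)(X + b − 1)·Q(X) = X(X − 1)·Q(X + 1) (equality of polynomials), then b is a nonnegative integer. -/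
/-!
Evaluating the identity at `x = 1 - b` kills the left-hand side through the factor `X + b - 1`,
so `Q(2 - b) = 0` as long as `x(x - 1) ≠ 0`; evaluating it again at each new root `x` of `Q`
gives `Q(x + 1) = 0`. If `b` is not a nonnegative integer, the factor `x(x - 1)` never vanishes
along `1 - b + ℕ`, so `Q` has infinitely many roots and cannot be monic.
-/

open Polynomial

theorem Polynomial.eq_zero_of_forall_eval_add_natCast_eq_zero {R : Type*} [CommRing R] [IsDomain R]
    [CharZero R] {p : R[X]} (c : R) (h : ∀ n : ℕ, p.eval (c + n) = 0) : p = 0 :=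
  p.eq_zero_of_infinite_isRoot <|
    Set.infinite_of_injective_forall_mem ((add_right_injective c).comp Nat.cast_injective) h

theorem Polynomial.eval_add_one_eq_zero_of_mul_eq_mul_comp {R : Type*} [CommRing R] [IsDomain R]
    {P Q : R[X]} (h : P * Q = X * (X - 1) * Q.comp (X + 1)) {x : R} (hx₀ : x ≠ 0) (hx₁ : x ≠ 1)
    (hx : P.eval x * Q.eval x = 0) : Q.eval (x + 1) = 0 := by
  have hev := congrArg (eval x) h
  simp only [eval_mul, eval_comp, eval_sub, eval_add, eval_X, eval_one, hx] at hev
  exact (mul_eq_zero.mp hev.symm).resolve_left (mul_ne_zero hx₀ (sub_ne_zero.mpr hx₁))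

theorem nonneg_int_of_monic_shift_general (a b : ℂ)
    (h : ∃ Q : Polynomial ℂ, Q.Monic ∧
      (X + C a) * (X + C b - 1) * Q = X * (X - 1) * (Q.comp (X + 1))) :
    ∃ k : ℕ, b = (k : ℂ) := by
  obtain ⟨Q, hQ, hEq⟩ := h
  by_contra! hb
  have step (n : ℕ) (hn : eval (1 - b + n) ((X + C a) * (X + C b - 1)) * Q.eval (1 - b + n) = 0) :
      Q.eval (1 - b + n + 1) = 0 :=
    eval_add_one_eq_zero_of_mul_eq_mul_comp hEq
      (fun h₀ => hb (n + 1) (by push_cast; linear_combination -h₀))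
      (fun h₁ => hb n (by linear_combination -h₁)) hn
  have roots (n : ℕ) : Q.eval (2 - b + n) = 0 := by
    induction n with
    | zero => simpa [one_add_one_eq_two, sub_add_eq_add_sub] using step 0 (by simp)
    | succ n ih =>
      convert step (n + 1) (mul_eq_zero_of_right _ (by convert ih using 2; push_cast; ring)) using 2
      push_cast; ring
  exact hQ.ne_zero (eq_zero_of_forall_eval_add_natCast_eq_zero _ roots)

/-- Let `a, b ∈ ℂ` with `a - b` a nonnegative integer. If there is a monic polynomial `Q`
with `(X + a)(X + b - 1)·Q(X) = X(X - 1)·Q(X + 1)`, then `b` is a nonnegative integer. -/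
theorem nonneg_int_of_monic_shift (a b : ℂ) (hab : ∃ k : ℕ, a - b = (k : ℂ))
    (h : ∃ Q : Polynomial ℂ, Q.Monic ∧
      (X + C a) * (X + C b - 1) * Q = X * (X - 1) * (Q.comp (X + 1))) :
    ∃ k : ℕ, b = (k : ℂ) :=
  nonneg_int_of_monic_shift_general a b h
end

section
/- Let c ∈ ℂ. If there exists a monic polynomial P ∈ ℂ[X] such that X(X − 1)·P(X) = (X + c)(X + c − 1)·P(X + 2) (equality of polynomials), then −c is a nonnegative integer. -/
/-!
If `-c ∉ ℕ`, evaluate the identity at `x = -c, -c - 2, -c - 4, …`. At `x = -c` the right-hand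
side vanishes through the factor `x + c`, and at each later point through `P(x + 2) = 0`; since
`x (x - 1) ≠ 0` along this progression, `P(x) = 0`. So the monic, hence nonzero, `P` would have
infinitely many roots.
-/

open Polynomial

namespace Polynomial

variable {R : Type*} [CommRing R] [IsDomain R]

theorem eq_zero_of_forall_eval_add_natCast_mul_eq_zero [CharZero R] {P : R[X]} {a d : R}
    (hd : d ≠ 0) (h : ∀ k : ℕ, P.eval (a + k * d) = 0) : P = 0 := by
  refine P.eq_zero_of_infinite_isRoot (Set.infinite_of_injective_forall_mem ?_ h)
  intro k m hkm
  exact_mod_cast mul_right_cancel₀ hd (add_left_cancel hkm)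

theorem eval_neg_sub_two_mul_eq_zero {P : R[X]} {c : R} (hc : ∀ n : ℕ, -c ≠ n)
    (heq : X * (X - 1) * P = (X + C c) * (X + C c - 1) * P.comp (X + 2)) (k : ℕ) :
    P.eval (-c - 2 * k) = 0 := by
  have hrel (x : R) : x * (x - 1) * P.eval x = (x + c) * (x + c - 1) * P.eval (x + 2) := by
    simpa [eval_comp] using congrArg (eval x) heq
  induction k with
  | zero =>
    have hx1 : -c - 1 ≠ 0 := fun h0 => hc 1 (by push_cast; linear_combination h0)
    have := hrel (-c)
    rw [neg_add_cancel, zero_mul, zero_mul] at this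
    simpa using (mul_eq_zero.mp this).resolve_left (mul_ne_zero (by exact_mod_cast hc 0) hx1)
  | succ k ih =>
    push_cast
    have hx : -c - 2 * ((k : R) + 1) ≠ 0 := fun h0 =>
      hc (2 * (k + 1)) (by push_cast; linear_combination h0)
    have hx1 : -c - 2 * ((k : R) + 1) - 1 ≠ 0 := fun h0 =>
      hc (2 * k + 3) (by push_cast; linear_combination h0)
    have := hrel (-c - 2 * ((k : R) + 1))
    rw [show -c - 2 * ((k : R) + 1) + 2 = -c - 2 * k by ring, ih, mul_zero] at this
    exact (mul_eq_zero.mp this).resolve_left (mul_ne_zero hx hx1)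

end Polynomial

/-- Let `c ∈ ℂ`. If there exists a monic polynomial `P ∈ ℂ[X]` with
`X(X - 1)·P(X) = (X + c)(X + c - 1)·P(X + 2)`, then `-c` is a nonnegative integer. -/
theorem neg_nonneg_int_of_monic_two_shift (c : ℂ)
    (h : ∃ P : Polynomial ℂ, P.Monic ∧
      X * (X - 1) * P = (X + C c) * (X + C c - 1) * (P.comp (X + 2))) :
    ∃ k : ℕ, -c = (k : ℂ) := by
  obtain ⟨P, hP, heq⟩ := h
  by_contra! hc
  refine hP.ne_zero <| eq_zero_of_forall_eval_add_natCast_mul_eq_zero (a := -c) (d := -2)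
    (by norm_num) fun k => ?_
  simpa [sub_eq_add_neg, mul_comm] using eval_neg_sub_two_mul_eq_zero hc heq k
end

section
/- Let m, n ≥ 1 be integers and let λ₁, …, λ_{m+n} be complex numbers. The following are equivalent. (i) There exists l ∈ ℤ≥0 such that: λ_{i+1} − λ_i ∈ ℤ≥0 for all 1 ≤ i ≤ m − 1; λ_m = −l; λ_j − λ_{j+1} ∈ ℤ≥0 for all m + 1 ≤ j ≤ m + n − 1; λ_{m+n} ∈ ℤ≥0; and λ_{m+j} = 0 for every j with l < j ≤ n. (ii) There exists a Young diagram Γ = (Γ₁ ≥ Γ₂ ≥ ⋯) contained in the (m,n)-hook, i.e. with Γ_{m+1} ≤ n, such that λ_i = −Γ_i for i = 1, …, m and λ_{m+j} = max(Γ′_j − m, 0) for j = 1, …, n, where Γ′ is the conjugate (transposed) diagram, so Γ′_j is the length of column j of Γ. -/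
/-- A Young diagram, recorded by its (weakly decreasing, eventually zero) row lengths,
indexed from `0`: `Γ i` is the length of row `i + 1`. -/
def IsYoungDiagramFun (Γ : ℕ → ℕ) : Prop :=
  Antitone Γ ∧ ∃ N : ℕ, ∀ i ≥ N, Γ i = 0

/-- The length of column `j` (with `j ≥ 1`) of the Young diagram `Γ`, i.e. `Γ′_j`. -/
noncomputable def colLen (Γ : ℕ → ℕ) (j : ℕ) : ℕ :=
  Set.ncard {i : ℕ | j ≤ Γ i}

lemma colLen_set_finite {Γ : ℕ → ℕ} (hz : ∃ N : ℕ, ∀ i ≥ N, Γ i = 0) {j : ℕ}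
    (hj : 1 ≤ j) : {i : ℕ | j ≤ Γ i}.Finite := by
  obtain ⟨N, hN⟩ := hz
  refine (Set.finite_Iio N).subset fun i hi => ?_
  simp only [Set.mem_setOf_eq] at hi
  simp only [Set.mem_Iio]
  by_contra h
  rw [hN i (le_of_not_gt h)] at hi
  omega

lemma ncard_Iio_nat (n : ℕ) : (Set.Iio n).ncard = n := by
  rw [← Finset.coe_range, Set.ncard_coe_finset, Finset.card_range]

/-- Let `m, n ≥ 1` and `λ₁, …, λ_{m+n} ∈ ℂ` (written `la i` for `λ_i`). The
finite-dimensionality conditions (4.3) hold iff `(λ₁, …, λ_{m+n}) = Γ^♯` for a Young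
diagram `Γ` contained in the `(m,n)`-hook, where
`Γ^♯ = (-Γ₁, …, -Γ_m, ν₁, …, ν_n)` with `ν_j = max(Γ′_j - m, 0)`. -/
theorem linear_hw_conditions_iff_hook_diagram (m n : ℕ) (hm : 1 ≤ m) (hn : 1 ≤ n)
    (la : ℕ → ℂ) :
    (∃ l : ℕ,
      (∀ i, 1 ≤ i → i ≤ m - 1 → ∃ k : ℕ, la (i + 1) - la i = (k : ℂ)) ∧
      la m = -(l : ℂ) ∧
      (∀ j, m + 1 ≤ j → j ≤ m + n - 1 → ∃ k : ℕ, la j - la (j + 1) = (k : ℂ)) ∧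
      (∃ k : ℕ, la (m + n) = (k : ℂ)) ∧
      (∀ j, l < j → j ≤ n → la (m + j) = 0)) ↔
    (∃ Γ : ℕ → ℕ, IsYoungDiagramFun Γ ∧ Γ m ≤ n ∧
      (∀ i, 1 ≤ i → i ≤ m → la i = -((Γ (i - 1) : ℂ))) ∧
      (∀ j, 1 ≤ j → j ≤ n → la (m + j) = ((colLen Γ j - m : ℕ) : ℂ))) := by
  constructor
  · rintro ⟨l, h1, h2, h3, h4, h5⟩
    classical
    choose! k hk using h1
    choose! d hd using h3
    obtain ⟨c, hc⟩ := h4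
    set a : ℕ → ℕ := fun i => l + ∑ t ∈ Finset.Ico i m, k t with ha_def
    set ν : ℕ → ℕ := fun j => c + ∑ t ∈ Finset.Ico j n, d (m + t) with hν_def
    -- λ_i = -(a i) on [1, m]
    have hla : ∀ dd : ℕ, ∀ i, 1 ≤ i → i + dd = m → la i = -(a i : ℂ) := by
      intro dd
      induction dd with
      | zero =>
        intro i h1i h2i
        have : i = m := by omega
        subst this
        simp only [ha_def, Finset.Ico_self, Finset.sum_empty, add_zero]
        exact h2
      | succ dd ih =>
        intro i h1i h2i
        have hi1 : la (i + 1) = -(a (i + 1) : ℂ) := ih (i + 1) (by omega) (by omega)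
        have hk' := hk i h1i (by omega)
        have haa : a i = k i + a (i + 1) := by
          simp only [ha_def]
          rw [Finset.sum_eq_sum_Ico_succ_bot (show i < m by omega)]
          ring
        have : la i = la (i + 1) - (k i : ℂ) := by
          rw [← hk']; ring
        rw [this, hi1, haa]
        push_cast
        ring
    have hlaA : ∀ i, 1 ≤ i → i ≤ m → la i = -(a i : ℂ) := fun i h1i h2i =>
      hla (m - i) i h1i (by omega)
    -- λ_{m+j} = ν j on [1, n]
    have hnu : ∀ dd : ℕ, ∀ j, 1 ≤ j → j + dd = n → la (m + j) = (ν j : ℂ) := by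
      intro dd
      induction dd with
      | zero =>
        intro j h1j h2j
        have : j = n := by omega
        subst this
        simp only [hν_def, Finset.Ico_self, Finset.sum_empty, add_zero]
        exact hc
      | succ dd ih =>
        intro j h1j h2j
        have hj1 : la (m + (j + 1)) = (ν (j + 1) : ℂ) := ih (j + 1) (by omega) (by omega)
        have hd' := hd (m + j) (by omega) (by omega)
        have hνν : ν j = d (m + j) + ν (j + 1) := by
          simp only [hν_def]
          rw [Finset.sum_eq_sum_Ico_succ_bot (show j < n by omega)]
          ring
        have : la (m + j) = la (m + j + 1) + (d (m + j) : ℂ) := by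
          rw [← hd']; ring
        rw [this, show m + j + 1 = m + (j + 1) from rfl, hj1, hνν]
        push_cast
        ring
    have hnuA : ∀ j, 1 ≤ j → j ≤ n → la (m + j) = (ν j : ℂ) := fun j h1j h2j =>
      hnu (n - j) j h1j (by omega)
    -- ν is antitone
    have hνmono : ∀ j j', j ≤ j' → ν j' ≤ ν j := by
      intro j j' h
      exact Nat.add_le_add_left
        (Finset.sum_le_sum_of_subset (Finset.Ico_subset_Ico h le_rfl)) c
    -- ν vanishes above l
    have hν0 : ∀ j, l < j → j ≤ n → ν j = 0 := by
      intro j hlj hjn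
      have := h5 j hlj hjn
      rw [hnuA j (by omega) hjn] at this
      exact_mod_cast this
    set Γ : ℕ → ℕ := fun i =>
      if i < m then a (i + 1)
      else ((Finset.Icc 1 n).filter (fun j => i - m + 1 ≤ ν j)).card with hΓ_def
    -- conjugate relation
    have hconj : ∀ j t, 1 ≤ j → j ≤ n → 1 ≤ t →
        (j ≤ ((Finset.Icc 1 n).filter (fun j' => t ≤ ν j')).card ↔ t ≤ ν j) := by
      intro j t hj hjn ht
      constructor
      · intro h
        by_contra h'
        have hsub : (Finset.Icc 1 n).filter (fun j' => t ≤ ν j') ⊆ Finset.Icc 1 (j - 1) := by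
          intro j' hj'
          simp only [Finset.mem_filter, Finset.mem_Icc] at hj' ⊢
          refine ⟨hj'.1.1, ?_⟩
          by_contra hge
          have := hνmono j j' (by omega)
          omega
        have := Finset.card_le_card hsub
        rw [Nat.card_Icc] at this
        omega
      · intro h
        have hsub : Finset.Icc 1 j ⊆ (Finset.Icc 1 n).filter (fun j' => t ≤ ν j') := by
          intro j' hj'
          simp only [Finset.mem_Icc] at hj'
          simp only [Finset.mem_filter, Finset.mem_Icc]
          exact ⟨⟨hj'.1, le_trans hj'.2 hjn⟩, le_trans h (hνmono j' j hj'.2)⟩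
        have := Finset.card_le_card hsub
        rw [Nat.card_Icc] at this
        omega
    -- Γ is antitone
    have hΓanti : Antitone Γ := by
      apply antitone_nat_of_succ_le
      intro i
      by_cases h1' : i + 1 < m
      · simp only [hΓ_def, if_pos h1', if_pos (show i < m by omega)]
        exact Nat.add_le_add_left
          (Finset.sum_le_sum_of_subset (Finset.Ico_subset_Ico (by omega) le_rfl)) l
      · by_cases h2' : i < m
        · simp only [hΓ_def, if_neg h1', if_pos h2']
          have him : i + 1 = m := by omega
          have hsub : (Finset.Icc 1 n).filter (fun j => i + 1 - m + 1 ≤ ν j) ⊆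
              Finset.Icc 1 l := by
            intro j hj
            simp only [Finset.mem_filter, Finset.mem_Icc] at hj ⊢
            refine ⟨hj.1.1, ?_⟩
            by_contra hge
            have := hν0 j (by omega) hj.1.2
            omega
          calc ((Finset.Icc 1 n).filter (fun j => i + 1 - m + 1 ≤ ν j)).card
              ≤ (Finset.Icc 1 l).card := Finset.card_le_card hsub
            _ = l := by rw [Nat.card_Icc]; omega
            _ ≤ a (i + 1) := Nat.le_add_right l _
        · simp only [hΓ_def, if_neg h1', if_neg h2']
          apply Finset.card_le_card
          intro j hj
          simp only [Finset.mem_filter, Finset.mem_Icc] at hj ⊢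
          exact ⟨hj.1, by omega⟩
    -- Γ m in terms of filter
    have hΓm : Γ m = ((Finset.Icc 1 n).filter (fun j => 1 ≤ ν j)).card := by
      simp only [hΓ_def, if_neg (lt_irrefl m), Nat.sub_self]
    refine ⟨Γ, ⟨hΓanti, ⟨m + ν 1 + 1, ?_⟩⟩, ?_, ?_, ?_⟩
    · -- eventually zero
      intro i hi
      have him : ¬ i < m := by omega
      simp only [hΓ_def, if_neg him]
      rw [Finset.card_eq_zero, Finset.filter_eq_empty_iff]
      intro j hj
      simp only [Finset.mem_Icc] at hj
      have := hνmono 1 j hj.1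
      omega
    · -- hook condition
      rw [hΓm]
      calc ((Finset.Icc 1 n).filter (fun j => 1 ≤ ν j)).card
          ≤ (Finset.Icc 1 n).card := Finset.card_le_card (Finset.filter_subset _ _)
        _ = n := by rw [Nat.card_Icc]; omega
    · -- first m coordinates
      intro i h1i h2i
      have him : i - 1 < m := by omega
      simp only [hΓ_def, if_pos him]
      rw [show i - 1 + 1 = i by omega]
      exact hlaA i h1i h2i
    · -- last n coordinates
      intro j hj1 hjn
      rw [hnuA j hj1 hjn]
      have key : colLen Γ j - m = ν j := by
        by_cases hν1 : 1 ≤ ν j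
        · have hset : {i : ℕ | j ≤ Γ i} = Set.Iio (m + ν j) := by
            ext i
            simp only [Set.mem_setOf_eq, Set.mem_Iio]
            by_cases him : i < m
            · have hΓmj : j ≤ Γ m := by
                rw [hΓm]
                exact (hconj j 1 hj1 hjn le_rfl).mpr hν1
              constructor
              · intro _; omega
              · intro _; exact le_trans hΓmj (hΓanti (by omega))
            · have hΓi : Γ i = ((Finset.Icc 1 n).filter (fun j' => i - m + 1 ≤ ν j')).card :=
                if_neg him
              rw [hΓi, hconj j (i - m + 1) hj1 hjn (by omega)]
              omega
          rw [colLen, hset, ncard_Iio_nat]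
          omega
        · have hsub : {i : ℕ | j ≤ Γ i} ⊆ Set.Iio m := by
            intro i hi
            simp only [Set.mem_setOf_eq] at hi
            simp only [Set.mem_Iio]
            by_contra him
            have hΓi : Γ i = ((Finset.Icc 1 n).filter (fun j' => i - m + 1 ≤ ν j')).card :=
              if_neg him
            rw [hΓi, hconj j (i - m + 1) hj1 hjn (by omega)] at hi
            omega
          have hle : colLen Γ j ≤ m := by
            have := Set.ncard_le_ncard hsub (Set.finite_Iio m)
            rwa [ncard_Iio_nat] at this
          omega
      rw [key]
  · rintro ⟨Γ, ⟨hanti, hzero⟩, hhook, hla, hν⟩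
    refine ⟨Γ (m - 1), ?_, ?_, ?_, ?_, ?_⟩
    · intro i h1i h2i
      refine ⟨Γ (i - 1) - Γ i, ?_⟩
      rw [hla (i + 1) (by omega) (by omega), show i + 1 - 1 = i from rfl,
        hla i h1i (by omega)]
      rw [Nat.cast_sub (hanti (show i - 1 ≤ i by omega))]
      ring
    · rw [hla m hm le_rfl]
    · intro j hj1 hj2
      obtain ⟨t, rfl⟩ : ∃ t, j = m + t := ⟨j - m, by omega⟩
      have ht1 : 1 ≤ t := by omega
      have ht2 : t + 1 ≤ n := by omega
      refine ⟨(colLen Γ t - m) - (colLen Γ (t + 1) - m), ?_⟩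
      rw [hν t ht1 (by omega), show m + t + 1 = m + (t + 1) from rfl,
        hν (t + 1) (by omega) ht2]
      have hcl : colLen Γ (t + 1) ≤ colLen Γ t := by
        apply Set.ncard_le_ncard
        · intro i hi
          simp only [Set.mem_setOf_eq] at hi ⊢
          omega
        · exact colLen_set_finite hzero ht1
      rw [Nat.cast_sub (Nat.sub_le_sub_right hcl m)]
    · exact ⟨colLen Γ n - m, hν n hn le_rfl⟩
    · intro j hlj hjn
      rw [hν j (by omega) hjn]
      have hsub : {i : ℕ | j ≤ Γ i} ⊆ Set.Iio m := by
        intro i hi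
        simp only [Set.mem_setOf_eq] at hi
        simp only [Set.mem_Iio]
        by_contra him
        have := hanti (show m - 1 ≤ i by omega)
        omega
      have hle : colLen Γ j ≤ m := by
        have := Set.ncard_le_ncard hsub (Set.finite_Iio m)
        rwa [ncard_Iio_nat] at this
      rw [show colLen Γ j - m = 0 by omega]
      simp
end
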